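/- Let E : ℝⁿ × ℝᵖ → ℝ be twice continuously differentiable and symmetric in the following sense: fix θ and suppose s_β solves ∇ₛE(s_β, θ) + β δ = 0 for a fixed vector δ ∈ ℝⁿ, with β ↦ s_β differentiable at 0 and H := ∇²ₛE(s₀, θ) invertible and symmetric. Then the centered finite-difference EP estimate converges to the exact directional quantity: lim_{β→0} (1/(2β)) (∇_θ E(s_β, θ) − ∇_θ E(s_{−β}, θ)) = −∂²_{θ,s}E(s₀, θ) · H⁻¹ · δ. -/

import Mathlib

open scoped RealInnerProductSpace

noncomputable section

abbrev Euc (n : ℕ) := EuclideanSpace ℝ (Fin n)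

/-!
Differentiating the equilibrium condition `∇ₛE(s_β, θ) + β δ = 0` at `β = 0` gives
`H ṡ₀ + δ = 0`, i.e. `ṡ₀ = -H⁻¹ δ`. By the chain rule `β ↦ ∇_θE(s_β, θ)` then has derivative
`∂²_{θ,s}E(s₀, θ) ṡ₀` at `0`, and a centered difference quotient converges to the derivative.
-/

open Filter Topology

theorem HasDerivAt.tendsto_centered_slope_zero {𝕜 F : Type*} [NontriviallyNormedField 𝕜]
    [CharZero 𝕜] [NormedAddCommGroup F] [NormedSpace 𝕜 F] {f : 𝕜 → F} {f' : F} {x : 𝕜}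
    (hf : HasDerivAt f f' x) :
    Tendsto (fun t => (2 * t)⁻¹ • (f (x + t) - f (x - t))) (𝓝[≠] 0) (𝓝 f') := by
  have hright := hf.tendsto_slope_zero
  have hleft := (HasDerivAt.comp_const_sub x 0 (by rwa [sub_zero])).tendsto_slope_zero
  have hlim := (hright.const_smul (2⁻¹ : 𝕜)).sub (hleft.const_smul (2⁻¹ : 𝕜))
  have htwo : (2⁻¹ + 2⁻¹ : 𝕜) = 1 := by norm_num
  rw [smul_neg, sub_neg_eq_add, ← add_smul, htwo, one_smul] at hlim
  refine hlim.congr fun t => ?_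
  simp only [zero_add, sub_zero, smul_smul, mul_inv, ← smul_sub]
  congr 1
  abel

theorem ContDiff.gradient {X F : Type*} [NormedAddCommGroup X] [NormedSpace ℝ X]
    [NormedAddCommGroup F] [InnerProductSpace ℝ F] [CompleteSpace F] {m n : WithTop ℕ∞}
    {f : X → F → ℝ} {g : X → F} (hf : ContDiff ℝ m (Function.uncurry f)) (hg : ContDiff ℝ n g)
    (hnm : n + 1 ≤ m) : ContDiff ℝ n fun x => gradient (f x) (g x) :=
  (InnerProductSpace.toDual ℝ F).symm.toContinuousLinearEquiv.contDiff.comp (hf.fderiv hg hnm)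

theorem HasFDerivAt.apply_eq_neg_of_eventually_add_smul_eq_zero {E F : Type*}
    [NormedAddCommGroup E] [NormedSpace ℝ E] [NormedAddCommGroup F] [NormedSpace ℝ F]
    {G : E → F} {L : E →L[ℝ] F} {s : ℝ → E} {v : E} {δ : F} (hG : HasFDerivAt G L (s 0))
    (hs : HasDerivAt s v 0) (h : ∀ᶠ β in 𝓝 0, G (s β) + β • δ = 0) : L v = -δ := by
  have hderiv : HasDerivAt (fun β => G (s β) + β • δ) (L v + δ) 0 := by
    have := (hG.comp_hasDerivAt 0 hs).add ((hasDerivAt_id' (0 : ℝ)).smul_const δ)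
    rwa [one_smul] at this
  exact eq_neg_of_add_eq_zero_left <| hderiv.unique <|
    (hasDerivAt_const (0 : ℝ) (0 : F)).congr_of_eventuallyEq h

theorem stmt_5_general {n p : ℕ}
    (E : Euc n → Euc p → ℝ) (hE : ContDiff ℝ 2 (Function.uncurry E))
    (θ : Euc p) (δ : Euc n)
    (s : ℝ → Euc n) (hs : DifferentiableAt ℝ s 0)
    (ε : ℝ) (hε : 0 < ε)
    (hnudge : ∀ β ∈ Set.Ioo (-ε) ε,
      gradient (fun s' => E s' θ) (s β) + β • δ = 0)
    (H Hinv : Euc n →L[ℝ] Euc n)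
    (hH : H = fderiv ℝ (fun s' => gradient (fun s'' => E s'' θ) s') (s 0))
    (h1 : Hinv.comp H = ContinuousLinearMap.id ℝ (Euc n)) :
    Filter.Tendsto
      (fun β : ℝ => (2 * β)⁻¹ •
        (gradient (fun θ' => E (s β) θ') θ - gradient (fun θ' => E (s (-β)) θ') θ))
      (nhdsWithin 0 {(0 : ℝ)}ᶜ)
      (nhds (-((fderiv ℝ (fun s' => gradient (fun θ' => E s' θ') θ) (s 0))
        (Hinv δ)))) := by
  have hgrad_s : ContDiff ℝ 1 fun s' => gradient (fun s'' => E s'' θ) s' :=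
    ContDiff.gradient (f := fun _ s'' => E s'' θ)
      (hE.comp (contDiff_snd.prodMk contDiff_const)) contDiff_id (by norm_num)
  have hgrad_θ : ContDiff ℝ 1 fun s' => gradient (fun θ' => E s' θ') θ :=
    hE.gradient contDiff_const (by norm_num)
  have hequilibrium : H (deriv s 0) = -δ := by
    have hlinearization : HasFDerivAt (fun s' => gradient (fun s'' => E s'' θ) s') H (s 0) := by
      rw [hH]
      exact (hgrad_s.differentiable one_ne_zero (s 0)).hasFDerivAt
    refine hlinearization.apply_eq_neg_of_eventually_add_smul_eq_zero hs.hasDerivAt ?_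
    filter_upwards [Ioo_mem_nhds (neg_neg_of_pos hε) hε] using hnudge
  have hvelocity : deriv s 0 = -Hinv δ :=
    calc deriv s 0 = Hinv (H (deriv s 0)) := by
          rw [← ContinuousLinearMap.comp_apply, h1, ContinuousLinearMap.id_apply]
      _ = -Hinv δ := by rw [hequilibrium, map_neg]
  have hcurve := (hgrad_θ.differentiable one_ne_zero (s 0)).hasFDerivAt.comp_hasDerivAt 0
    hs.hasDerivAt
  rw [hvelocity, map_neg] at hcurve
  simpa using hcurve.tendsto_centered_slope_zero

/-- Correctness of the centered EP (C-EP) estimate: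
`lim_{β→0} (1/(2β)) (∇_θ E(s_β, θ) − ∇_θ E(s_{−β}, θ)) = −∂²_{θ,s}E(s₀, θ)·H⁻¹·δ`. -/
theorem stmt_5 {n p : ℕ}
    (E : Euc n → Euc p → ℝ) (hE : ContDiff ℝ 2 (Function.uncurry E))
    (θ : Euc p) (δ : Euc n)
    (s : ℝ → Euc n) (hs : DifferentiableAt ℝ s 0)
    (ε : ℝ) (hε : 0 < ε)
    (hnudge : ∀ β ∈ Set.Ioo (-ε) ε,
      gradient (fun s' => E s' θ) (s β) + β • δ = 0)
    (H Hinv : Euc n →L[ℝ] Euc n)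
    (hH : H = fderiv ℝ (fun s' => gradient (fun s'' => E s'' θ) s') (s 0))
    (hsym : ∀ u v, ⟪H u, v⟫ = ⟪u, H v⟫)
    (h1 : Hinv.comp H = ContinuousLinearMap.id ℝ (Euc n))
    (h2 : H.comp Hinv = ContinuousLinearMap.id ℝ (Euc n)) :
    Filter.Tendsto
      (fun β : ℝ => (2 * β)⁻¹ •
        (gradient (fun θ' => E (s β) θ') θ - gradient (fun θ' => E (s (-β)) θ') θ))
      (nhdsWithin 0 {(0 : ℝ)}ᶜ)
      (nhds (-((fderiv ℝ (fun s' => gradient (fun θ' => E s' θ') θ) (s 0))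
        (Hinv δ)))) :=
  stmt_5_general E hE θ δ s hs ε hε hnudge H Hinv hH h1
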